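/- Let λ ∈ (0,1) and ν > 0 be real. For N > 0 define D(N) = √( ((1+λ)·N + (1−λ)·ν + 1)² − 4λ·N·(N+1) ) and I_rc(N) = h(N) − h( (D(N) + (1−λ)(N−ν) − 1)/2 ) − h( (D(N) − (1−λ)(N−ν) − 1)/2 ). Then lim_{N→∞} I_rc(N) = −h(ν) − log₂(1−λ). (I_rc(N) is the reverse coherent information of the state obtained by sending half of a two-mode squeezed vacuum with local mean photon number N through the thermal attenuator of transmissivity λ and thermal noise ν.) -/

import Mathlib

/-- The bosonic entropy `h(x) = (x+1)·log₂(x+1) − x·log₂ x` (with `h(0) = 0`,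
which holds automatically since `Real.logb 2 0 = 0`). -/
noncomputable def bosonicEntropy (x : ℝ) : ℝ :=
  (x + 1) * Real.logb 2 (x + 1) - x * Real.logb 2 x

/-!
Put `B = (1−λ)N + (1+λ)ν + 1`. The radicand is `B² − 4λν(ν+1)`, so `D − B → 0`, and the two
arguments of `h` are `(1−λ)N + λν + o(1)` and `ν + o(1)`. Since `h(t) = log₂(t+1) + log₂ e + o(1)`
as `t → ∞`, the difference `h(N) − h((1−λ)N + O(1))` tends to `log₂(1/(1−λ))`, while the last
term tends to `h(ν)` by continuity.
-/

open Filter Real Topology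

lemma continuous_bosonicEntropy : Continuous bosonicEntropy := by
  have hmul : Continuous fun x : ℝ => x * logb 2 x := by
    simpa only [logb, mul_div_assoc'] using continuous_mul_log.div_const (log 2)
  exact (hmul.comp (continuous_add_const 1)).sub hmul

lemma tendsto_bosonicEntropy_sub_logb_atTop :
    Tendsto (fun t : ℝ => bosonicEntropy t - logb 2 (t + 1)) atTop (𝓝 (1 / log 2)) := by
  refine ((tendsto_mul_log_one_add_div_atTop 1).div_const (log 2)).congr' ?_
  filter_upwards [eventually_gt_atTop 0] with t ht
  rw [show 1 + 1 / t = (t + 1) / t by field_simp, log_div (by positivity) ht.ne']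
  simp only [bosonicEntropy, logb]
  field_simp
  ring

lemma tendsto_bosonicEntropy_sub_bosonicEntropy_mul_add {a b : ℝ} {g : ℝ → ℝ} (ha : 0 < a)
    (hg : Tendsto g atTop (𝓝 b)) :
    Tendsto (fun t => bosonicEntropy t - bosonicEntropy (a * t + g t)) atTop
      (𝓝 (-logb 2 a)) := by
  have hf : Tendsto (fun t => a * t + g t) atTop atTop :=
    (tendsto_id.const_mul_atTop ha).atTop_add hg
  have hratio : Tendsto (fun t => (a * t + g t + 1) / (t + 1)) atTop (𝓝 a) := by
    have hsmall : Tendsto (fun t => a + (g t + 1 - a) / (t + 1)) atTop (𝓝 a) := by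
      simpa using ((hg.add_const 1).sub_const a).div_atTop
        (tendsto_atTop_add_const_right _ 1 tendsto_id) |>.const_add a
    refine hsmall.congr' ?_
    filter_upwards [eventually_gt_atTop (-1)] with t ht
    have : t + 1 ≠ 0 := by linarith
    field_simp
    ring
  have hlim := (tendsto_bosonicEntropy_sub_logb_atTop.sub
    (tendsto_bosonicEntropy_sub_logb_atTop.comp hf)).sub
    ((continuousAt_logb (b := 2) ha.ne').tendsto.comp hratio)
  rw [sub_self, zero_sub] at hlim
  refine hlim.congr' ?_
  filter_upwards [eventually_gt_atTop (-1), hf.eventually_gt_atTop (-1)] with t ht hft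
  simp only [Function.comp, logb_div (by linarith : a * t + g t + 1 ≠ 0) (by linarith : t + 1 ≠ 0)]
  ring

lemma tendsto_sqrt_sq_sub_sub_self (c : ℝ) :
    Tendsto (fun b => √(b ^ 2 - c) - b) atTop (𝓝 0) := by
  have hden : Tendsto (fun b => √(b ^ 2 - c) + b) atTop atTop :=
    tendsto_atTop_add_left_of_le _ 0 (fun _ => sqrt_nonneg _) tendsto_id
  have hquot : Tendsto (fun b => -c / (√(b ^ 2 - c) + b)) atTop (𝓝 0) :=
    tendsto_const_nhds.div_atTop hden
  refine hquot.congr' ?_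
  filter_upwards [eventually_gt_atTop 0, eventually_ge_atTop √|c|] with b hb hbc
  have hrad : c ≤ b ^ 2 := by
    nlinarith [le_abs_self c, sq_sqrt (abs_nonneg c), sqrt_nonneg |c|]
  rw [div_eq_iff (by positivity)]
  nlinarith [sq_sqrt (sub_nonneg.2 hrad)]

theorem stmt7_general (lam nu : ℝ) (hlam : lam ∈ Set.Ioo (0 : ℝ) 1) :
    Filter.Tendsto (fun N : ℝ =>
        bosonicEntropy N
          - bosonicEntropy
            ((Real.sqrt (((1 + lam) * N + (1 - lam) * nu + 1) ^ 2 - 4 * lam * N * (N + 1))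
                + (1 - lam) * (N - nu) - 1) / 2)
          - bosonicEntropy
            ((Real.sqrt (((1 + lam) * N + (1 - lam) * nu + 1) ^ 2 - 4 * lam * N * (N + 1))
                - (1 - lam) * (N - nu) - 1) / 2))
      Filter.atTop
      (nhds (-(bosonicEntropy nu) - Real.logb 2 (1 - lam))) := by
  have ha : 0 < 1 - lam := sub_pos.2 hlam.2
  set B : ℝ → ℝ := fun N => (1 - lam) * N + (1 + lam) * nu + 1
  set e : ℝ → ℝ := fun N =>
    √(((1 + lam) * N + (1 - lam) * nu + 1) ^ 2 - 4 * lam * N * (N + 1)) - B N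
  have he : Tendsto e atTop (𝓝 0) := by
    have hB : Tendsto B atTop atTop :=
      tendsto_atTop_add_const_right _ _ <| tendsto_atTop_add_const_right _ _ <|
        tendsto_id.const_mul_atTop ha
    refine ((tendsto_sqrt_sq_sub_sub_self (4 * lam * nu * (nu + 1))).comp hB).congr fun N => ?_
    simp only [Function.comp, e, B]
    ring_nf
  have hx := tendsto_bosonicEntropy_sub_bosonicEntropy_mul_add ha
    ((tendsto_const_nhds (x := lam * nu)).add (he.div_const 2))
  have hy := (continuous_bosonicEntropy.tendsto' _ (bosonicEntropy nu) (by simp)).comp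
    ((tendsto_const_nhds (x := nu)).add (he.div_const 2))
  rw [neg_sub_comm]
  refine ((hx.sub hy).congr fun N => ?_)
  simp only [Function.comp, e, B]
  ring_nf

/-- For a thermal attenuator of transmissivity `λ ∈ (0,1)` and thermal noise `ν > 0`, the
reverse coherent information `I_rc(N)` of the output of half a two-mode squeezed vacuum with
local mean photon number `N` tends to `−h(ν) − log₂(1−λ)` as `N → ∞`. -/
theorem stmt7 (lam nu : ℝ) (hlam : lam ∈ Set.Ioo (0 : ℝ) 1) (hnu : 0 < nu) :
    Filter.Tendsto (fun N : ℝ =>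
        bosonicEntropy N
          - bosonicEntropy
            ((Real.sqrt (((1 + lam) * N + (1 - lam) * nu + 1) ^ 2 - 4 * lam * N * (N + 1))
                + (1 - lam) * (N - nu) - 1) / 2)
          - bosonicEntropy
            ((Real.sqrt (((1 + lam) * N + (1 - lam) * nu + 1) ^ 2 - 4 * lam * N * (N + 1))
                - (1 - lam) * (N - nu) - 1) / 2))
      Filter.atTop
      (nhds (-(bosonicEntropy nu) - Real.logb 2 (1 - lam))) :=
  stmt7_general lam nu hlam
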